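/- Let X ⊆ S^1 be finite, 0 < r < 1/2, and let VR(X;r) be the Vietoris–Rips complex of X at scale r (simplices are subsets of X of diameter less than r, in the arc-length metric). If x_0 ∈ X is not in the image of f_r : X → X, then x_0 is dominated in VR(X;r) by some vertex in f_r(X). Explicitly, letting x_0' be the first point clockwise from x_0 lying in f_r(X), we have X ∩ (x_0 − r, x_0 + r) ⊆ X ∩ (x_0' − r, x_0' + r), so every simplex containing x_0 remains a simplex after adding x_0'. -/

import Mathlib

/-!
Put `d = cdist x₀ x₀'`. A point `y ∈ X` of the arc `(x₀ - r, x₀ + r)` lies more than `d`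
clockwise past `x₀ - r`: otherwise `y` precedes `x₀` by less than `r`, so `f y` reaches at least
`x₀` and lands less than `d` past it, contradicting the choice of `x₀'`. Hence the arc shifted by
`d` still contains `y`, and since `r`-balls are such arcs for `r < 1/2`, every simplex through `x₀`
stays a simplex after adding `x₀'`.
-/

noncomputable section

instance : Fact ((0:ℝ) < 1) := ⟨zero_lt_one⟩

/-- Clockwise distance on the circle `S¹ = ℝ/ℤ`: the representative of `y - x` in `[0,1)`. -/
noncomputable def cdist (x y : AddCircle (1:ℝ)) : ℝ :=
  ((AddCircle.equivIco 1 0) (y - x)).1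

/-- The arc-length metric on `S¹`. -/
noncomputable def arcDist (x y : AddCircle (1:ℝ)) : ℝ :=
  min (cdist x y) (cdist y x)

/-- `f` is the cyclic dynamical system map `f_r` on the finite set `X`. -/
def IsCyclicMap (X : Finset (AddCircle (1:ℝ))) (r : ℝ)
    (f : AddCircle (1:ℝ) → AddCircle (1:ℝ)) : Prop :=
  ∀ x ∈ X, f x ∈ X ∧ cdist x (f x) < r ∧
    ∀ y ∈ X, cdist x y < r → cdist x y ≤ cdist x (f x)

lemma cdist_coe (a b : ℝ) : cdist a b = Int.fract (b - a) := by
  rw [cdist, ← AddCircle.coe_sub, AddCircle.coe_equivIco_mk_apply, mul_one, div_one]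

lemma cdist_nonneg (x y : AddCircle (1:ℝ)) : 0 ≤ cdist x y :=
  ((AddCircle.equivIco 1 0) (y - x)).2.1

lemma cdist_lt_one (x y : AddCircle (1:ℝ)) : cdist x y < 1 :=
  (zero_add (1:ℝ)) ▸ ((AddCircle.equivIco 1 0) (y - x)).2.2

lemma cdist_self (x : AddCircle (1:ℝ)) : cdist x x = 0 := by
  induction x using QuotientAddGroup.induction_on with | H a =>
  rw [cdist_coe, sub_self, Int.fract_zero]

lemma cdist_sub_sub (x y t : AddCircle (1:ℝ)) : cdist (x - t) (y - t) = cdist x y := by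
  rw [cdist, cdist, sub_sub_sub_cancel_right]

lemma cdist_sub_coe_self (x : AddCircle (1:ℝ)) {t : ℝ} (ht0 : 0 ≤ t) (ht1 : t < 1) :
    cdist (x - t) x = t := by
  induction x using QuotientAddGroup.induction_on with | H a =>
  rw [← AddCircle.coe_sub, cdist_coe, sub_sub_cancel, Int.fract_eq_self.2 ⟨ht0, ht1⟩]

lemma cdist_eq_fract_sub (x y z : AddCircle (1:ℝ)) :
    cdist y z = Int.fract (cdist x z - cdist x y) := by
  induction x using QuotientAddGroup.induction_on with | H a =>
  induction y using QuotientAddGroup.induction_on with | H b =>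
  induction z using QuotientAddGroup.induction_on with | H c =>
  simp only [cdist_coe]
  exact Int.fract_eq_fract.2 ⟨⌊c - a⌋ - ⌊b - a⌋, by simp only [Int.fract]; push_cast; ring⟩

lemma cdist_add_cdist_of_le {x y z : AddCircle (1:ℝ)} (h : cdist x y ≤ cdist x z) :
    cdist x y + cdist y z = cdist x z := by
  rw [cdist_eq_fract_sub x y z, Int.fract_eq_self.2 ⟨sub_nonneg.2 h, by
    linarith [cdist_nonneg x y, cdist_lt_one x z]⟩]
  ring

lemma arcDist_comm (x y : AddCircle (1:ℝ)) : arcDist x y = arcDist y x := min_comm _ _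

lemma arcDist_self (x : AddCircle (1:ℝ)) : arcDist x x = 0 := by
  simp [arcDist, cdist_self]

lemma cdist_add_cdist_swap {x y : AddCircle (1:ℝ)} (h : x ≠ y) : cdist x y + cdist y x = 1 := by
  induction x using QuotientAddGroup.induction_on with | H a =>
  induction y using QuotientAddGroup.induction_on with | H b =>
  have hne : Int.fract (b - a) ≠ 0 := by
    rintro hzero
    obtain ⟨n, hn⟩ := Int.fract_eq_zero_iff.1 hzero
    refine h (sub_eq_zero.1 ?_).symm
    rw [← AddCircle.coe_sub, AddCircle.coe_eq_zero_iff]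
    exact ⟨n, by simpa using hn⟩
  rw [cdist_coe, cdist_coe, ← neg_sub b a, Int.fract_neg hne, add_sub_cancel]

/-- The open `r`-ball around `x` is the open arc `(x - r, x + r)`. -/
lemma arcDist_lt_iff {r : ℝ} (hr0 : 0 ≤ r) (hr1 : r ≤ 1/2) (x y : AddCircle (1:ℝ)) :
    arcDist x y < r ↔
      0 < cdist (x - (r : AddCircle (1:ℝ))) y ∧ cdist (x - (r : AddCircle (1:ℝ))) y < 2 * r := by
  have hrx : cdist (x - r) x = r := cdist_sub_coe_self x hr0 (by linarith)
  rcases eq_or_ne x y with rfl | hxy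
  · rw [arcDist_self, hrx]
    exact ⟨fun h => ⟨h, by linarith⟩, And.left⟩
  have hswap := cdist_add_cdist_swap hxy
  have := cdist_nonneg x y
  have := cdist_nonneg y x
  have := cdist_nonneg (x - r) y
  have := cdist_lt_one (x - r) y
  rw [arcDist, min_lt_iff]
  rcases le_total (cdist (x - r) y) r with hle | hle
  · have hsum := cdist_add_cdist_of_le (hle.trans_eq hrx.symm)
    rw [hrx] at hsum
    constructor
    · rintro (h | h) <;> constructor <;> linarith
    · rintro ⟨h, -⟩; right; linarith
  · have hsum := cdist_add_cdist_of_le (hrx.trans_le hle)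
    rw [hrx] at hsum
    constructor
    · rintro (h | h) <;> constructor <;> linarith
    · rintro ⟨-, h⟩; left; linarith

lemma forall_arcDist_lt_insert {r : ℝ} {σ : Finset (AddCircle (1:ℝ))} {x : AddCircle (1:ℝ)}
    (hr : 0 < r) (hσ : ∀ a ∈ σ, ∀ b ∈ σ, arcDist a b < r) (hx : ∀ b ∈ σ, arcDist x b < r) :
    ∀ a ∈ insert x σ, ∀ b ∈ insert x σ, arcDist a b < r := by
  simp only [Finset.forall_mem_insert]
  exact ⟨⟨(arcDist_self x).trans_lt hr, hx⟩, fun a ha => ⟨arcDist_comm a x ▸ hx a ha, hσ a ha⟩⟩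

namespace IsCyclicMap

variable {X : Finset (AddCircle (1:ℝ))} {r : ℝ} {f : AddCircle (1:ℝ) → AddCircle (1:ℝ)}
  {x₀ x₀' y : AddCircle (1:ℝ)}

lemma cdist_lt_cdist_sub (hf : IsCyclicMap X r f) (hr1 : r < 1) (hx₀ : x₀ ∈ X)
    (hfirst : ∀ y ∈ X, cdist x₀ x₀' ≤ cdist x₀ (f y)) (hy : y ∈ X)
    (hpos : 0 < cdist (x₀ - (r : AddCircle (1:ℝ))) y) :
    cdist x₀ x₀' < cdist (x₀ - (r : AddCircle (1:ℝ))) y := by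
  by_contra! hle
  have hdr : cdist x₀ x₀' < r := (hfirst x₀ hx₀).trans_lt (hf x₀ hx₀).2.1
  have hrx : cdist (x₀ - r) x₀ = r :=
    cdist_sub_coe_self x₀ (by linarith [cdist_nonneg x₀ x₀']) hr1
  have hyx := cdist_add_cdist_of_le (hle.trans (hdr.trans_eq hrx.symm).le)
  obtain ⟨-, hfy_lt, hmax⟩ := hf y hy
  have hfyx := cdist_add_cdist_of_le (hmax x₀ hx₀ (by linarith))
  linarith [hfirst y hy]

lemma mem_arc_of_mem_arc (hf : IsCyclicMap X r f) (hr1 : r < 1) (hx₀ : x₀ ∈ X)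
    (hfirst : ∀ y ∈ X, cdist x₀ x₀' ≤ cdist x₀ (f y)) (hy : y ∈ X)
    (h : 0 < cdist (x₀ - (r : AddCircle (1:ℝ))) y ∧ cdist (x₀ - (r : AddCircle (1:ℝ))) y < 2 * r) :
    0 < cdist (x₀' - (r : AddCircle (1:ℝ))) y ∧ cdist (x₀' - (r : AddCircle (1:ℝ))) y < 2 * r := by
  have hlt := hf.cdist_lt_cdist_sub hr1 hx₀ hfirst hy h.1
  have hshift : cdist (x₀ - r) (x₀' - r) = cdist x₀ x₀' := cdist_sub_sub _ _ _
  have hsum := cdist_add_cdist_of_le (hshift.trans_le hlt.le)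
  rw [hshift] at hsum
  constructor <;> linarith [cdist_nonneg x₀ x₀']

end IsCyclicMap

theorem not_in_image_dominated_general
    (X : Finset (AddCircle (1:ℝ))) (r : ℝ) (hr0 : 0 < r) (hr1 : r < 1/2)
    (f : AddCircle (1:ℝ) → AddCircle (1:ℝ)) (hf : IsCyclicMap X r f)
    (x₀ : AddCircle (1:ℝ)) (hx₀ : x₀ ∈ X)
    (x₀' : AddCircle (1:ℝ))
    (hx₀'first : ∀ y ∈ Finset.image f X, cdist x₀ x₀' ≤ cdist x₀ y) :
    (∀ y ∈ X,
      (0 < cdist (x₀ - ((r : ℝ) : AddCircle (1:ℝ))) y ∧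
        cdist (x₀ - ((r : ℝ) : AddCircle (1:ℝ))) y < 2 * r) →
      (0 < cdist (x₀' - ((r : ℝ) : AddCircle (1:ℝ))) y ∧
        cdist (x₀' - ((r : ℝ) : AddCircle (1:ℝ))) y < 2 * r)) ∧
    (∀ σ : Finset (AddCircle (1:ℝ)), σ ⊆ X → x₀ ∈ σ →
      (∀ a ∈ σ, ∀ b ∈ σ, arcDist a b < r) →
      ∀ a ∈ insert x₀' σ, ∀ b ∈ insert x₀' σ, arcDist a b < r) := by
  have hfirst : ∀ y ∈ X, cdist x₀ x₀' ≤ cdist x₀ (f y) :=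
    fun y hy => hx₀'first (f y) (Finset.mem_image_of_mem f hy)
  have hdom := fun y (hy : y ∈ X) => hf.mem_arc_of_mem_arc (by linarith) hx₀ hfirst hy
  refine ⟨hdom, fun σ hσX hx₀σ hσ => forall_arcDist_lt_insert hr0 hσ fun b hb => ?_⟩
  have hball := arcDist_lt_iff hr0.le hr1.le
  exact (hball x₀' b).2 (hdom b (hσX hb) ((hball x₀ b).1 (hσ x₀ hx₀σ b hb)))

/-- If `x₀ ∈ X` is not in the image of `f_r` and `x₀'` is the first point clockwise from
`x₀` lying in `f_r(X)`, then `X ∩ (x₀ − r, x₀ + r) ⊆ X ∩ (x₀' − r, x₀' + r)`; hence `x₀`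
is dominated by `x₀'` in the Vietoris–Rips complex `VR(X;r)`: every simplex (subset of `X`
of diameter `< r`) containing `x₀` stays a simplex after adding `x₀'`. -/
theorem not_in_image_dominated
    (X : Finset (AddCircle (1:ℝ))) (r : ℝ) (hr0 : 0 < r) (hr1 : r < 1/2)
    (f : AddCircle (1:ℝ) → AddCircle (1:ℝ)) (hf : IsCyclicMap X r f)
    (x₀ : AddCircle (1:ℝ)) (hx₀ : x₀ ∈ X)
    (hx₀nim : ∀ y ∈ X, f y ≠ x₀)
    (x₀' : AddCircle (1:ℝ)) (hx₀'im : x₀' ∈ Finset.image f X)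
    (hx₀'first : ∀ y ∈ Finset.image f X, cdist x₀ x₀' ≤ cdist x₀ y) :
    (∀ y ∈ X,
      (0 < cdist (x₀ - ((r : ℝ) : AddCircle (1:ℝ))) y ∧
        cdist (x₀ - ((r : ℝ) : AddCircle (1:ℝ))) y < 2 * r) →
      (0 < cdist (x₀' - ((r : ℝ) : AddCircle (1:ℝ))) y ∧
        cdist (x₀' - ((r : ℝ) : AddCircle (1:ℝ))) y < 2 * r)) ∧
    (∀ σ : Finset (AddCircle (1:ℝ)), σ ⊆ X → x₀ ∈ σ →
      (∀ a ∈ σ, ∀ b ∈ σ, arcDist a b < r) →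
      ∀ a ∈ insert x₀' σ, ∀ b ∈ insert x₀' σ, arcDist a b < r) :=
  not_in_image_dominated_general X r hr0 hr1 f hf x₀ hx₀ x₀' hx₀'first
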